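/- The functions f₁(q,p) = j₁, f₂(q,p) = p, f₃(q,p) = k j₁ q, f₄(q,p) = j₂ − (k/2) p q on ℝ² define a canonical realization of the coadjoint orbit through λ(j) = (j₁, 0, 0, j₂): (a) (f₁, f₂, f₃, f₄)(0,0) = (j₁, 0, 0, j₂); (b) for all i, j ∈ {1,2,3,4} and all (q,p) ∈ ℝ², (∂f_i/∂p)(∂f_j/∂q) − (∂f_i/∂q)(∂f_j/∂p) = Σ_k C^k_{ij} f_k(q,p); (c) the invariants are constant on the image: 2 f₁ f₄ + f₂ f₃ = 2 j₁ j₂ identically on ℝ². -/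

import Mathlib

/-- The structure constants `C^l_{ij}` of the Lie algebra `𝔤` (indices `0,…,3` for `1,…,4`):
the nonzero brackets are `[e₂,e₃] = k e₁`, `[e₂,e₄] = −(k/2) e₂`, `[e₃,e₄] = (k/2) e₃`. -/
noncomputable def structC (k : ℝ) (i j l : Fin 4) : ℝ :=
  if i = 1 ∧ j = 2 ∧ l = 0 then k
  else if i = 2 ∧ j = 1 ∧ l = 0 then -k
  else if i = 1 ∧ j = 3 ∧ l = 1 then -(k / 2)
  else if i = 3 ∧ j = 1 ∧ l = 1 then k / 2
  else if i = 2 ∧ j = 3 ∧ l = 2 then k / 2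
  else if i = 3 ∧ j = 2 ∧ l = 2 then -(k / 2)
  else 0

/-- The transition functions `f₁ = j₁`, `f₂ = p`, `f₃ = k j₁ q`, `f₄ = j₂ − (k/2) p q`
to canonical coordinates `(q,p)` on the coadjoint orbit through `λ(j) = (j₁,0,0,j₂)`. -/
noncomputable def canonF (k j₁ j₂ : ℝ) (i : Fin 4) (q p : ℝ) : ℝ :=
  ![j₁, p, k * j₁ * q, j₂ - k / 2 * p * q] i

section

variable (k j₁ j₂ : ℝ)

theorem canonF_zero_zero (i : Fin 4) : canonF k j₁ j₂ i 0 0 = ![j₁, 0, 0, j₂] i := by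
  fin_cases i <;> simp [canonF]

theorem hasDerivAt_canonF_snd (i : Fin 4) (q p : ℝ) :
    HasDerivAt (fun p' => canonF k j₁ j₂ i q p') (![0, 1, 0, -(k / 2 * q)] i) p := by
  fin_cases i
  · exact hasDerivAt_const p j₁
  · exact hasDerivAt_id p
  · exact hasDerivAt_const p (k * j₁ * q)
  · simpa [canonF] using (((hasDerivAt_id p).const_mul (k / 2)).mul_const q).const_sub j₂

theorem hasDerivAt_canonF_fst (i : Fin 4) (q p : ℝ) :
    HasDerivAt (fun q' => canonF k j₁ j₂ i q' p) (![0, 0, k * j₁, -(k / 2 * p)] i) q := by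
  fin_cases i
  · exact hasDerivAt_const q j₁
  · exact hasDerivAt_const q p
  · simpa [canonF] using (hasDerivAt_id q).const_mul (k * j₁)
  · simpa [canonF] using ((hasDerivAt_id q).const_mul (k / 2 * p)).const_sub j₂

theorem canonF_bracket (i j : Fin 4) (q p : ℝ) :
    deriv (fun p' => canonF k j₁ j₂ i q p') p * deriv (fun q' => canonF k j₁ j₂ j q' p) q
      - deriv (fun q' => canonF k j₁ j₂ i q' p) q * deriv (fun p' => canonF k j₁ j₂ j q p') p
      = ∑ l : Fin 4, structC k i j l * canonF k j₁ j₂ l q p := by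
  simp only [(hasDerivAt_canonF_snd _ _ _ _ _ _).deriv, (hasDerivAt_canonF_fst _ _ _ _ _ _).deriv,
    Fin.sum_univ_four]
  fin_cases i <;> fin_cases j <;> simp [canonF, structC] <;> ring

theorem canonF_casimir (q p : ℝ) :
    2 * canonF k j₁ j₂ 0 q p * canonF k j₁ j₂ 3 q p
      + canonF k j₁ j₂ 1 q p * canonF k j₁ j₂ 2 q p = 2 * j₁ * j₂ := by
  simp only [canonF, Matrix.cons_val]
  ring

end

theorem canonical_realization_general (k j₁ j₂ : ℝ) :
    (∀ i : Fin 4, canonF k j₁ j₂ i 0 0 = ![j₁, 0, 0, j₂] i) ∧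
    (∀ i j : Fin 4, ∀ q p : ℝ,
      deriv (fun p' => canonF k j₁ j₂ i q p') p * deriv (fun q' => canonF k j₁ j₂ j q' p) q
        - deriv (fun q' => canonF k j₁ j₂ i q' p) q * deriv (fun p' => canonF k j₁ j₂ j q p') p
        = ∑ l : Fin 4, structC k i j l * canonF k j₁ j₂ l q p) ∧
    (∀ q p : ℝ,
      2 * canonF k j₁ j₂ 0 q p * canonF k j₁ j₂ 3 q p
        + canonF k j₁ j₂ 1 q p * canonF k j₁ j₂ 2 q p = 2 * j₁ * j₂) :=
  ⟨canonF_zero_zero k j₁ j₂, canonF_bracket k j₁ j₂, canonF_casimir k j₁ j₂⟩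

/-- The functions `f_i(q,p)` define a canonical realization of the
coadjoint orbit through `λ(j) = (j₁,0,0,j₂)`: (a) `f(0,0) = λ(j)`; (b) they satisfy the
canonical-bracket relations `{f_i, f_j} = Σ_k C^k_{ij} f_k`; (c) the Casimir invariant
`2 f₁ f₄ + f₂ f₃` is constantly `2 j₁ j₂`. -/
theorem canonical_realization (k j₁ j₂ : ℝ) (hk : 0 < k) :
    (∀ i : Fin 4, canonF k j₁ j₂ i 0 0 = ![j₁, 0, 0, j₂] i) ∧
    (∀ i j : Fin 4, ∀ q p : ℝ,
      deriv (fun p' => canonF k j₁ j₂ i q p') p * deriv (fun q' => canonF k j₁ j₂ j q' p) q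
        - deriv (fun q' => canonF k j₁ j₂ i q' p) q * deriv (fun p' => canonF k j₁ j₂ j q p') p
        = ∑ l : Fin 4, structC k i j l * canonF k j₁ j₂ l q p) ∧
    (∀ q p : ℝ,
      2 * canonF k j₁ j₂ 0 q p * canonF k j₁ j₂ 3 q p
        + canonF k j₁ j₂ 1 q p * canonF k j₁ j₂ 2 q p = 2 * j₁ * j₂) :=
  canonical_realization_general k j₁ j₂
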